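/- arXiv:2201.03523 — 7 statements merged into one kernel-verified Lean document; each statement's English description precedes it below -/
import Mathlib

section
/- For every natural number n and every real number θ, max(|U_n(cos θ)|, |U_{n+1}(cos θ)|) ≥ 1/2, where U_n denotes the n-th Chebyshev polynomial of the second kind. -/
/-! The values `u = U_n(x)`, `v = U_{n+1}(x)` lie on the conic `u² + v² - 2xuv = 1`. For `|x| ≤ 1`
this forces `(|u| + |v|)² ≥ u² + v² - 2xuv = 1`, so one of `|u|`, `|v|` is at least `1/2`. -/

namespace Polynomial.Chebyshev

theorem U_sq_add_U_sq (R : Type*) [CommRing R] (n : ℤ) :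
    U R n ^ 2 + U R (n + 1) ^ 2 - 2 * X * U R n * U R (n + 1) = 1 := by
  have h := congr_arg (·.comp (2 * X)) (S_sq_add_S_sq R n)
  simp only [sub_comp, add_comp, mul_comp, pow_comp, X_comp, one_comp, S_comp_two_mul_X] at h
  linear_combination h

end Polynomial.Chebyshev

theorem one_le_abs_add_abs_of_sq_add_sq_sub {K : Type*} [CommRing K] [LinearOrder K]
    [IsStrictOrderedRing K] {x u v : K} (hx : |x| ≤ 1)
    (h : u ^ 2 + v ^ 2 - 2 * x * u * v = 1) : 1 ≤ |u| + |v| := by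
  have cross : -(x * (u * v)) ≤ |u| * |v| :=
    calc -(x * (u * v)) ≤ |x| * (|u| * |v|) := by rw [← abs_mul, ← abs_mul]; exact neg_le_abs _
      _ ≤ |u| * |v| := mul_le_of_le_one_left (by positivity) hx
  nlinarith [abs_nonneg u, abs_nonneg v, sq_abs u, sq_abs v]

open Polynomial in
theorem max_chebyshevU_ge_half (n : ℕ) (θ : ℝ) :
    max |(Polynomial.Chebyshev.U ℝ n).eval (Real.cos θ)|
      |(Polynomial.Chebyshev.U ℝ (n + 1)).eval (Real.cos θ)| ≥ 1 / 2 := by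
  have hconic := congr_arg (eval (Real.cos θ)) (Chebyshev.U_sq_add_U_sq ℝ n)
  simp only [eval_sub, eval_add, eval_mul, eval_pow, eval_ofNat, eval_X, eval_one] at hconic
  have hsum := one_le_abs_add_abs_of_sq_add_sq_sub (Real.abs_cos_le_one θ) hconic
  by_contra! hsmall
  rw [max_lt_iff] at hsmall
  linarith
end

section
/- Let r be a natural number, θ : Fin r → ℝ, and α : Fin r → ℕ. Then there exists δ : Fin r → {0,1} such that ∏_{i} |U_{2·α(i) + δ(i)}(cos θ(i))|² ≥ 4^{−r}, where U_n denotes the n-th Chebyshev polynomial of the second kind. -/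
/-!
Chebyshev polynomials of the second kind satisfy the Cassini-type identity
`U_n² + U_{n+1}² - 2x U_n U_{n+1} = 1`. For `|x| ≤ 1` its left side is at most
`(|U_n(x)| + |U_{n+1}(x)|)²`, so one of two consecutive values has absolute value at least `1/2`.
Choosing such an exponent in each factor bounds the product below by `4⁻ʳ`.
-/

open Polynomial Polynomial.Chebyshev

theorem Polynomial.Chebyshev.U_sq_add_U_sq_s4 (R : Type*) [CommRing R] (n : ℤ) :
    U R n ^ 2 + U R (n + 1) ^ 2 - 2 * X * U R n * U R (n + 1) = 1 := by
  have h := congr_arg (·.comp (2 * X)) (S_sq_add_S_sq R n)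
  simpa only [sub_comp, add_comp, mul_comp, pow_comp, X_comp, S_comp_two_mul_X, one_comp,
    mul_assoc] using h

theorem one_le_sq_or_one_le_sq_of_sq_add_sq_sub_mul_eq_one {a b x : ℝ} (hx : |x| ≤ 1)
    (h : a ^ 2 + b ^ 2 - 2 * x * a * b = 1) : 1 / 4 ≤ a ^ 2 ∨ 1 / 4 ≤ b ^ 2 := by
  have hsum : 1 ≤ (|a| + |b|) ^ 2 := by
    have : -(x * (a * b)) ≤ |a| * |b| := by
      rw [← abs_mul]
      calc -(x * (a * b)) ≤ |x * (a * b)| := neg_le_abs _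
        _ = |x| * |a * b| := abs_mul _ _
        _ ≤ |a * b| := mul_le_of_le_one_left (abs_nonneg _) hx
    nlinarith [sq_abs a, sq_abs b]
  by_contra! hlt
  have ha : |a| < 1 / 2 := by nlinarith [sq_abs a, abs_nonneg a]
  have hb : |b| < 1 / 2 := by nlinarith [sq_abs b, abs_nonneg b]
  nlinarith [abs_nonneg a, abs_nonneg b]

theorem exists_le_one_quarter_le_chebyshevU_eval_sq (m : ℕ) {x : ℝ} (hx : |x| ≤ 1) :
    ∃ d : ℕ, d ≤ 1 ∧ 1 / 4 ≤ |(U ℝ (m + d)).eval x| ^ 2 := by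
  have h := congr_arg (eval x) (U_sq_add_U_sq_s4 ℝ m)
  simp only [eval_sub, eval_add, eval_mul, eval_pow, eval_X, eval_ofNat, eval_one] at h
  rcases one_le_sq_or_one_le_sq_of_sq_add_sq_sub_mul_eq_one hx h with h0 | h1
  · exact ⟨0, zero_le_one, by simpa using h0⟩
  · exact ⟨1, le_rfl, by simpa using h1⟩

theorem exists_delta_prod_chebyshevU_sq_ge (r : ℕ) (θ : Fin r → ℝ) (α : Fin r → ℕ) :
    ∃ δ : Fin r → ℕ, (∀ i, δ i ≤ 1) ∧
      ∏ i : Fin r,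
        |(Polynomial.Chebyshev.U ℝ (2 * α i + δ i)).eval (Real.cos (θ i))| ^ 2
        ≥ ((4 : ℝ) ^ r)⁻¹ := by
  choose δ hδ hU using fun i =>
    exists_le_one_quarter_le_chebyshevU_eval_sq (2 * α i) (Real.abs_cos_le_one (θ i))
  refine ⟨δ, hδ, ?_⟩
  calc ((4 : ℝ) ^ r)⁻¹ = ∏ _i : Fin r, (1 / 4 : ℝ) := by simp
    _ ≤ _ := Finset.prod_le_prod (fun _ _ => by norm_num) fun i _ => by exact_mod_cast hU i
end

section
/- Let p be a prime and let m, n be natural numbers. Then ∫_0^π U_n(cos θ)·U_m(cos θ) · (2/π)·((p+1)·sin²θ)/((p^{1/2} + p^{−1/2})² − 4·cos²θ) dθ equals (p/(p−1))·(p^{−|m−n|/2} − p^{−(m+n)/2 − 1}) if m ≡ n (mod 2), and equals 0 otherwise. Here U_n denotes the n-th Chebyshev polynomial of the second kind. -/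
/-!
Write `r = 1/p`. Since `sin θ · U_n(cos θ) = sin((n+1)θ)`, the product `U_n U_m sin² θ` equals
`(cos((n-m)θ) - cos((n+m+2)θ)) / 2`, and the denominator of the Plancherel density is
`p (1 - 2r cos 2θ + r²)`. So the integral reduces to integrals of `cos(cθ)` against the Poisson
kernel `P_r(2θ) = (1 - r²) / (1 - 2r cos 2θ + r²) = ∑_{k ∈ ℤ} r^|k| cos(2kθ)`. Integrating
term by term over `[0, π]`, only the term `k = -c/2` survives, giving `π r^{|c|/2}` for even `c`
and `0` for odd `c`.
-/

open Real Polynomial.Chebyshev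

lemma hasSum_pow_mul_cos_add {r : ℝ} (hr : |r| < 1) (x y : ℝ) :
    HasSum (fun k : ℕ => r ^ k * cos (y + k * x))
      ((cos y - r * cos (y - x)) / (1 - 2 * r * cos x + r ^ 2)) := by
  set z : ℂ := r * Complex.exp (x * Complex.I)
  have hz : ‖z‖ < 1 := by simpa [z, Complex.norm_exp_ofReal_mul_I] using hr
  have hre : ∀ k : ℕ, (Complex.exp (y * Complex.I) * z ^ k).re = r ^ k * cos (y + k * x) := by
    intro k
    rw [mul_pow, ← Complex.exp_nat_mul, mul_left_comm, ← Complex.exp_add, ← Complex.ofReal_pow,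
      show y * Complex.I + k * (x * Complex.I) = ((y + k * x : ℝ) : ℂ) * Complex.I by
        push_cast; ring,
      Complex.re_ofReal_mul, Complex.exp_ofReal_mul_I_re]
  have hsum : (Complex.exp (y * Complex.I) / (1 - z)).re
      = (cos y - r * cos (y - x)) / (1 - 2 * r * cos x + r ^ 2) := by
    have hnormSq : Complex.normSq (1 - z) = 1 - 2 * r * cos x + r ^ 2 := by
      simp only [Complex.normSq_apply, z, Complex.sub_re, Complex.sub_im, Complex.one_re,
        Complex.one_im, Complex.re_ofReal_mul, Complex.im_ofReal_mul, Complex.exp_ofReal_mul_I_re,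
        Complex.exp_ofReal_mul_I_im]
      nlinarith [sin_sq_add_cos_sq x]
    rw [Complex.div_re, hnormSq, cos_sub]
    simp only [z, Complex.sub_re, Complex.sub_im, Complex.one_re, Complex.one_im,
      Complex.re_ofReal_mul, Complex.im_ofReal_mul, Complex.exp_ofReal_mul_I_re,
      Complex.exp_ofReal_mul_I_im]
    ring
  rw [← hsum]
  exact (Complex.reCLM.hasSum ((hasSum_geometric_of_norm_lt_one hz).mul_left _)).congr_fun
    fun k => (hre k).symm

lemma one_sub_two_mul_cos_add_sq_pos {r : ℝ} (hr : |r| < 1) (x : ℝ) :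
    0 < 1 - 2 * r * cos x + r ^ 2 := by
  have : r * cos x ≤ |r| := (le_abs_self _).trans (by
    rw [abs_mul]; exact mul_le_of_le_one_right (abs_nonneg r) (abs_cos_le_one x))
  nlinarith [sq_abs r, abs_nonneg r]

lemma abs_inv_lt_one_of_one_lt {q : ℝ} (hq : 1 < q) : |q⁻¹| < 1 := by
  rw [abs_inv, abs_of_pos (by linarith)]
  exact inv_lt_one_of_one_lt₀ hq

lemma hasSum_pow_natAbs_mul_cos_add {r : ℝ} (hr : |r| < 1) (x y : ℝ) :
    HasSum (fun k : ℤ => r ^ k.natAbs * cos (y + k * x))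
      (cos y * ((1 - r ^ 2) / (1 - 2 * r * cos x + r ^ 2))) := by
  have hD := (one_sub_two_mul_cos_add_sq_pos hr x).ne'
  have hnonneg : HasSum (fun n : ℕ => r ^ (n : ℤ).natAbs * cos (y + (n : ℤ) * x))
      ((cos y - r * cos (y - x)) / (1 - 2 * r * cos x + r ^ 2)) := by
    simpa using hasSum_pow_mul_cos_add hr x y
  have hneg : HasSum (fun n : ℕ => r ^ (-(n + 1 : ℤ)).natAbs * cos (y + (-(n + 1 : ℤ) : ℤ) * x))
      (r * ((cos (y - x) - r * cos y) / (1 - 2 * r * cos x + r ^ 2))) := by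
    have h := (hasSum_pow_mul_cos_add hr (-x) (y - x)).mul_left r
    rw [cos_neg, sub_neg_eq_add, sub_add_cancel] at h
    refine h.congr_fun fun n => ?_
    rw [show (-(n + 1 : ℤ)).natAbs = n + 1 by omega]
    push_cast
    ring_nf
  convert HasSum.of_nat_of_neg_add_one
    (f := fun k : ℤ => r ^ k.natAbs * cos (y + k * x)) hnonneg hneg using 1
  field_simp
  ring

lemma summable_pow_natAbs {r : ℝ} (hr : |r| < 1) : Summable fun k : ℤ => r ^ k.natAbs := by
  have h := summable_geometric_of_abs_lt_one hr
  refine .of_nat_of_neg_add_one (by simpa using h) ((summable_nat_add_iff 1).mpr h |>.congr ?_)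
  intro n
  rw [show (-(n + 1 : ℤ)).natAbs = n + 1 by omega]

lemma integral_cos_int_mul (j : ℤ) :
    ∫ θ in (0 : ℝ)..π, cos (j * θ) = if j = 0 then π else 0 := by
  split_ifs with hj
  · simp [hj]
  · have hj' : (j : ℝ) ≠ 0 := by exact_mod_cast hj
    simp [intervalIntegral.integral_comp_mul_left (fun x => cos x) hj', sin_int_mul_pi]

lemma hasSum_integral_cos_mul_poissonKernel {r : ℝ} (hr : |r| < 1) (c : ℤ) :
    HasSum (fun k : ℤ => r ^ k.natAbs * if c + 2 * k = 0 then π else 0)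
      (∫ θ in (0 : ℝ)..π, cos (c * θ) * ((1 - r ^ 2) / (1 - 2 * r * cos (2 * θ) + r ^ 2))) := by
  have hterm : ∀ k : ℤ, ∫ θ in (0 : ℝ)..π, r ^ k.natAbs * cos (c * θ + k * (2 * θ))
      = r ^ k.natAbs * if c + 2 * k = 0 then π else 0 := by
    intro k
    rw [intervalIntegral.integral_const_mul, ← integral_cos_int_mul]
    congr 2 with θ
    push_cast
    ring_nf
  simp only [← hterm]
  refine intervalIntegral.hasSum_integral_of_dominated_convergence
    (F := fun (k : ℤ) (θ : ℝ) => r ^ k.natAbs * cos (c * θ + k * (2 * θ)))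
    (fun k _ => |r| ^ k.natAbs)
    (fun k => (by fun_prop : Continuous _).aestronglyMeasurable)
    (fun k => .of_forall fun θ _ => ?_)
    (.of_forall fun _ _ => summable_pow_natAbs (by rwa [abs_abs]))
    intervalIntegrable_const
    (.of_forall fun θ _ => hasSum_pow_natAbs_mul_cos_add hr (2 * θ) (c * θ))
  rw [norm_mul, norm_pow, Real.norm_eq_abs, Real.norm_eq_abs]
  exact mul_le_of_le_one_right (by positivity) (abs_cos_le_one _)

lemma integral_cos_mul_poissonKernel {r : ℝ} (hr : |r| < 1) (c : ℤ) :
    ∫ θ in (0 : ℝ)..π, cos (c * θ) * ((1 - r ^ 2) / (1 - 2 * r * cos (2 * θ) + r ^ 2))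
      = if Even c then π * r ^ (c / 2).natAbs else 0 := by
  refine (hasSum_integral_cos_mul_poissonKernel hr c).unique ?_
  split_ifs with hc
  · obtain ⟨j, rfl⟩ := hc
    convert hasSum_single (-j) fun k hk => ?_ using 1
    · rw [if_pos (by omega), show (j + j) / 2 = j by omega, Int.natAbs_neg, mul_comm]
    · rw [if_neg (by omega), mul_zero]
  · refine hasSum_zero.congr_fun fun k => ?_
    rw [if_neg fun h => hc ⟨-k, by omega⟩, mul_zero]

lemma chebyshevU_mul_chebyshevU_mul_sin_sq (n m : ℤ) (θ : ℝ) :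
    (U ℝ n).eval (cos θ) * (U ℝ m).eval (cos θ) * sin θ ^ 2
      = (cos ((n - m) * θ) - cos ((n + m + 2) * θ)) / 2 := by
  rw [show ∀ a b s : ℝ, a * b * s ^ 2 = (a * s) * (b * s) by intros; ring,
    U_real_cos, U_real_cos, show (n - m) * θ = (n + 1) * θ - (m + 1) * θ by ring,
    show (n + m + 2) * θ = (n + 1) * θ + (m + 1) * θ by ring, cos_sub, cos_add]
  ring

lemma rpow_half_add_rpow_neg_half_sq_sub_four_mul_cos_sq {q : ℝ} (hq : 0 < q) (θ : ℝ) :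
    (q ^ ((1 : ℝ) / 2) + q ^ (-(1 : ℝ) / 2)) ^ 2 - 4 * cos θ ^ 2
      = q * (1 - 2 * q⁻¹ * cos (2 * θ) + q⁻¹ ^ 2) := by
  have hsq : (q ^ ((1 : ℝ) / 2)) ^ 2 = q := by
    rw [← rpow_natCast, ← rpow_mul hq.le]; norm_num
  have hs : q ^ ((1 : ℝ) / 2) ≠ 0 := (rpow_pos_of_pos hq _).ne'
  rw [neg_div, rpow_neg hq.le, cos_two_mul]
  field_simp
  rw [hsq]
  ring

lemma chebyshevU_mul_chebyshevU_mul_plancherel_density {q : ℝ} (hq : 1 < q) (n m : ℤ) (θ : ℝ) :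
    (U ℝ n).eval (cos θ) * (U ℝ m).eval (cos θ) *
        ((2 / π) * ((q + 1) * sin θ ^ 2) /
          ((q ^ ((1 : ℝ) / 2) + q ^ (-(1 : ℝ) / 2)) ^ 2 - 4 * cos θ ^ 2))
      = q / (π * (q - 1)) *
          (cos ((n - m) * θ) * ((1 - q⁻¹ ^ 2) / (1 - 2 * q⁻¹ * cos (2 * θ) + q⁻¹ ^ 2))
            - cos ((n + m + 2) * θ) * ((1 - q⁻¹ ^ 2) / (1 - 2 * q⁻¹ * cos (2 * θ) + q⁻¹ ^ 2))) := by
  have hD := (one_sub_two_mul_cos_add_sq_pos (abs_inv_lt_one_of_one_lt hq) (2 * θ)).ne'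
  have hq₁ : q - 1 ≠ 0 := by linarith
  rw [rpow_half_add_rpow_neg_half_sq_sub_four_mul_cos_sq (by linarith), ← sub_mul,
    show cos ((n - m) * θ) - cos ((n + m + 2) * θ)
      = 2 * ((U ℝ n).eval (cos θ) * (U ℝ m).eval (cos θ) * sin θ ^ 2) by
        rw [chebyshevU_mul_chebyshevU_mul_sin_sq]; ring]
  field_simp
  ring

lemma inv_pow_natAbs_half {q : ℝ} (hq : 0 < q) {c : ℤ} (hc : Even c) :
    q⁻¹ ^ (c / 2).natAbs = q ^ (-(|(c : ℝ)| / 2)) := by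
  obtain ⟨j, rfl⟩ := hc
  rw [show (j + j) / 2 = j by omega, Int.cast_add, ← two_mul, abs_mul, abs_two,
    mul_div_cancel_left₀ _ two_ne_zero, rpow_neg hq.le, inv_pow, ← Int.cast_abs,
    ← Nat.cast_natAbs, rpow_natCast]

theorem chebyshevU_plancherel_inner_product (p : ℕ) (hp : p.Prime) (m n : ℕ) :
    ∫ θ in (0:ℝ)..π,
        (Polynomial.Chebyshev.U ℝ n).eval (cos θ) * (Polynomial.Chebyshev.U ℝ m).eval (cos θ) *
          ((2 / π) * (((p : ℝ) + 1) * sin θ ^ 2) /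
            (((p : ℝ) ^ ((1 : ℝ) / 2) + (p : ℝ) ^ (-(1 : ℝ) / 2)) ^ 2 - 4 * cos θ ^ 2))
      = if m % 2 = n % 2 then
          ((p : ℝ) / ((p : ℝ) - 1)) *
            ((p : ℝ) ^ (-(|(m : ℝ) - (n : ℝ)| / 2)) - (p : ℝ) ^ (-(((m : ℝ) + (n : ℝ)) / 2) - 1))
        else 0 := by
  have hq : (1 : ℝ) < p := by exact_mod_cast hp.one_lt
  have hr := abs_inv_lt_one_of_one_lt hq
  have hint : ∀ c : ℝ, IntervalIntegrable (fun θ => cos (c * θ) *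
      ((1 - (p : ℝ)⁻¹ ^ 2) / (1 - 2 * (p : ℝ)⁻¹ * cos (2 * θ) + (p : ℝ)⁻¹ ^ 2)))
      MeasureTheory.volume 0 π :=
    fun c => (Continuous.mul (by fun_prop) (continuous_const.div (by fun_prop)
      fun θ => (one_sub_two_mul_cos_add_sq_pos hr _).ne')).intervalIntegrable _ _
  have hdiff := integral_cos_mul_poissonKernel hr ((n : ℤ) - m)
  have hsum := integral_cos_mul_poissonKernel hr ((n : ℤ) + m + 2)
  have hdiff_even : Even ((n : ℤ) - m) ↔ m % 2 = n % 2 := by rw [Int.even_iff]; omega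
  have hsum_even : Even ((n : ℤ) + m + 2) ↔ m % 2 = n % 2 := by rw [Int.even_iff]; omega
  simp_rw [chebyshevU_mul_chebyshevU_mul_plancherel_density hq]
  rw [intervalIntegral.integral_const_mul, intervalIntegral.integral_sub (hint _) (hint _)]
  push_cast at hdiff hsum ⊢
  rw [hdiff, hsum]
  by_cases hmn : m % 2 = n % 2
  · rw [if_pos hmn, if_pos (hdiff_even.mpr hmn), if_pos (hsum_even.mpr hmn),
      inv_pow_natAbs_half (by linarith) (hdiff_even.mpr hmn),
      inv_pow_natAbs_half (by linarith) (hsum_even.mpr hmn)]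
    push_cast
    rw [abs_sub_comm, abs_of_nonneg (by positivity : (0 : ℝ) ≤ n + m + 2),
      show -(((n : ℝ) + m + 2) / 2) = -((m + n) / 2) - 1 by ring]
    field_simp
  · rw [if_neg hmn, if_neg (mt hdiff_even.mp hmn), if_neg (mt hsum_even.mp hmn)]
    simp
end

section
/- Let p be a prime and T a natural number. Then ((p+1)/(4π)) · ∫_0^π cos(2Tθ) / ((p−1)²/(4p) + sin²θ) dθ = p / ((p−1)·p^T). -/
/-!
Write `w(θ) = (q - 1)² / (4q) + sin² θ` and `J(x) = ∫₀^π cos (2xθ) / w(θ) dθ`. Since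
`4q · w(θ) = q² + 1 - 2q cos 2θ`, multiplying the integrand by `2 cos 2θ` gives the three-term
recurrence `J(x + 1) + J(x - 1) = (q + 1/q) J(x) - 4 ∫₀^π cos (2xθ) dθ`, whose last term vanishes
at positive integers; with `J(-1) = J(1)` this forces `J(n) = J(0) / qⁿ`. Finally
`4q · w(θ) = (q - 1)² cos² θ + (q + 1)² sin² θ`, so `J(0) = 4πq / (q² - 1)` by the classical
`∫₀^π dθ / (a² cos² θ + b² sin² θ) = π / (ab)`.
-/

open Real MeasureTheory

section ArgumentLift

variable {k : ℝ}

lemma cos_sq_add_mul_sin_sq_pos (hk : 0 < k) (θ : ℝ) : 0 < cos θ ^ 2 + k * sin θ ^ 2 := by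
  rcases eq_or_ne (sin θ) 0 with h | h
  · nlinarith [cos_sq_add_sin_sq θ]
  · positivity

/-- The function differentiated here is the continuous branch of `arg (cos θ + k sin θ * I)`:
it equals `θ + arg ((cos θ + k sin θ * I) * exp (-θ * I))`, and the last product has positive
real part. -/
lemma hasDerivAt_add_arctan (hk : 0 < k) (θ : ℝ) :
    HasDerivAt (fun θ => θ + arctan ((k - 1) * (sin θ * cos θ) / (cos θ ^ 2 + k * sin θ ^ 2)))
      (k / (cos θ ^ 2 + k ^ 2 * sin θ ^ 2)) θ := by
  have hv := (cos_sq_add_mul_sin_sq_pos hk θ).ne'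
  have hw := (cos_sq_add_mul_sin_sq_pos (pow_pos hk 2) θ).ne'
  have hu := ((hasDerivAt_sin θ).fun_mul (hasDerivAt_cos θ)).const_mul (k - 1)
  have hv' := ((hasDerivAt_cos θ).fun_pow 2).fun_add (((hasDerivAt_sin θ).fun_pow 2).const_mul k)
  refine ((hasDerivAt_id θ).add (hu.fun_div hv' hv).arctan).congr_deriv ?_
  norm_num
  field_simp
  linear_combination
    k * (cos θ ^ 2 + k ^ 2 * sin θ ^ 2) * (cos θ ^ 2 + sin θ ^ 2) * cos_sq_add_sin_sq θ

lemma integral_div_cos_sq_add_sq_mul_sin_sq (hk : 0 < k) :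
    ∫ θ in (0:ℝ)..π, k / (cos θ ^ 2 + k ^ 2 * sin θ ^ 2) = π := by
  have hint : IntervalIntegrable (fun θ => k / (cos θ ^ 2 + k ^ 2 * sin θ ^ 2)) volume 0 π :=
    (continuous_const.div (by fun_prop)
      fun θ => (cos_sq_add_mul_sin_sq_pos (pow_pos hk 2) θ).ne').intervalIntegrable 0 π
  rw [intervalIntegral.integral_eq_sub_of_hasDerivAt (fun θ _ => hasDerivAt_add_arctan hk θ) hint]
  simp

end ArgumentLift

lemma integral_cos_two_mul_natCast_mul {n : ℕ} (hn : n ≠ 0) :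
    ∫ θ in (0:ℝ)..π, cos (2 * n * θ) = 0 := by
  have h2n : (2 * n : ℝ) ≠ 0 := by positivity
  rw [intervalIntegral.integral_comp_mul_left cos h2n, integral_cos, mul_zero, sin_zero,
    show (2 * n : ℝ) * π = (2 * n : ℕ) * π by push_cast; rfl, sin_nat_mul_pi]
  simp

noncomputable def weightDenom (q θ : ℝ) : ℝ := (q - 1) ^ 2 / (4 * q) + sin θ ^ 2

noncomputable def weightedCosIntegral (q x : ℝ) : ℝ :=
  ∫ θ in (0:ℝ)..π, cos (2 * x * θ) / weightDenom q θ

section WeightedCosIntegral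

variable {q : ℝ}

lemma weightDenom_pos (hq : 1 < q) (θ : ℝ) : 0 < weightDenom q θ := by
  have : 0 < (q - 1) ^ 2 / (4 * q) := by
    apply div_pos <;> nlinarith
  unfold weightDenom
  positivity

lemma cos_two_mul_eq_weightDenom (hq : q ≠ 0) (θ : ℝ) :
    cos (2 * θ) = (q ^ 2 + 1) / (2 * q) - 2 * weightDenom q θ := by
  rw [weightDenom, cos_two_mul, cos_sq']
  field_simp
  ring

lemma intervalIntegrable_cos_mul_div_weightDenom (hq : 1 < q) (x : ℝ) :
    IntervalIntegrable (fun θ => cos (2 * x * θ) / weightDenom q θ) volume 0 π :=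
  (Continuous.div (by fun_prop) (by unfold weightDenom; fun_prop)
    fun θ => (weightDenom_pos hq θ).ne').intervalIntegrable 0 π

lemma weightedCosIntegral_add_one_add_sub_one (hq : 1 < q) (x : ℝ) :
    weightedCosIntegral q (x + 1) + weightedCosIntegral q (x - 1) =
      (q ^ 2 + 1) / q * weightedCosIntegral q x - 4 * ∫ θ in (0:ℝ)..π, cos (2 * x * θ) := by
  have hq0 : q ≠ 0 := by positivity
  have hpointwise (θ : ℝ) :
      cos (2 * (x + 1) * θ) / weightDenom q θ + cos (2 * (x - 1) * θ) / weightDenom q θ =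
        (q ^ 2 + 1) / q * (cos (2 * x * θ) / weightDenom q θ) - 4 * cos (2 * x * θ) := by
    have hw := (weightDenom_pos hq θ).ne'
    rw [← add_div, cos_add_cos, show (2 * (x + 1) * θ + 2 * (x - 1) * θ) / 2 = 2 * x * θ by ring,
      show (2 * (x + 1) * θ - 2 * (x - 1) * θ) / 2 = 2 * θ by ring, cos_two_mul_eq_weightDenom hq0]
    field_simp
    ring
  have hcos : Continuous fun θ => 4 * cos (2 * x * θ) := by fun_prop
  simp only [weightedCosIntegral]
  rw [← intervalIntegral.integral_add (intervalIntegrable_cos_mul_div_weightDenom hq _)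
      (intervalIntegrable_cos_mul_div_weightDenom hq _),
    intervalIntegral.integral_congr fun θ _ => hpointwise θ,
    intervalIntegral.integral_sub ((intervalIntegrable_cos_mul_div_weightDenom hq _).const_mul _)
      (hcos.intervalIntegrable _ _),
    intervalIntegral.integral_const_mul, intervalIntegral.integral_const_mul]

lemma weightedCosIntegral_neg (x : ℝ) : weightedCosIntegral q (-x) = weightedCosIntegral q x := by
  simp only [weightedCosIntegral, mul_neg, neg_mul, cos_neg]

lemma weightedCosIntegral_zero (hq : 1 < q) :
    weightedCosIntegral q 0 = 4 * π * q / (q ^ 2 - 1) := by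
  have hk : 0 < (q + 1) / (q - 1) := div_pos (by linarith) (by linarith)
  have hpointwise (θ : ℝ) : cos (2 * 0 * θ) / weightDenom q θ =
      4 * q / (q ^ 2 - 1) *
        ((q + 1) / (q - 1) / (cos θ ^ 2 + ((q + 1) / (q - 1)) ^ 2 * sin θ ^ 2)) := by
    have hq1 : q - 1 ≠ 0 := by linarith
    have hq2 : q ^ 2 - 1 ≠ 0 := by nlinarith
    have hw := (weightDenom_pos hq θ).ne'
    have hden : cos θ ^ 2 + ((q + 1) / (q - 1)) ^ 2 * sin θ ^ 2 =
        4 * q / (q - 1) ^ 2 * weightDenom q θ := by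
      rw [weightDenom, cos_sq']
      field_simp
      ring
    rw [hden, mul_zero, zero_mul, cos_zero]
    field_simp
    ring
  rw [weightedCosIntegral, intervalIntegral.integral_congr fun θ _ => hpointwise θ,
    intervalIntegral.integral_const_mul, integral_div_cos_sq_add_sq_mul_sin_sq hk]
  ring

lemma weightedCosIntegral_one (hq : 1 < q) :
    weightedCosIntegral q 1 = weightedCosIntegral q 0 / q := by
  have h := weightedCosIntegral_add_one_add_sub_one hq 0
  rw [zero_add, zero_sub, weightedCosIntegral_neg] at h
  rw [weightedCosIntegral_zero hq] at h ⊢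
  simp only [mul_zero, zero_mul, cos_zero, intervalIntegral.integral_const, sub_zero,
    smul_eq_mul, mul_one] at h
  have hq0 : q ≠ 0 := by positivity
  have hq2 : q ^ 2 - 1 ≠ 0 := by nlinarith
  field_simp at h ⊢
  linear_combination h / 2

lemma weightedCosIntegral_natCast (hq : 1 < q) (n : ℕ) :
    weightedCosIntegral q n = weightedCosIntegral q 0 / q ^ n := by
  have hq0 : q ≠ 0 := by positivity
  induction n using Nat.twoStepInduction with
  | zero => simp
  | one => simpa using weightedCosIntegral_one hq
  | more n ih ih1 =>
    have h := weightedCosIntegral_add_one_add_sub_one hq ((n : ℝ) + 1)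
    rw [add_sub_cancel_right, ← Nat.cast_succ, ← Nat.cast_succ,
      integral_cos_two_mul_natCast_mul n.succ_ne_zero, ih, ih1] at h
    rw [eq_sub_of_add_eq h]
    field_simp
    ring

end WeightedCosIntegral

open Real in
theorem cos_integral_residue_eval (p : ℕ) (hp : p.Prime) (T : ℕ) :
    (((p : ℝ) + 1) / (4 * π)) *
        ∫ θ in (0:ℝ)..π,
          cos (2 * (T : ℝ) * θ) / (((p : ℝ) - 1) ^ 2 / (4 * (p : ℝ)) + sin θ ^ 2)
      = (p : ℝ) / (((p : ℝ) - 1) * (p : ℝ) ^ T) := by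
  have hp1 : 1 < (p : ℝ) := by exact_mod_cast hp.one_lt
  change _ * weightedCosIntegral p T = _
  rw [weightedCosIntegral_natCast hp1, weightedCosIntegral_zero hp1]
  have : (p : ℝ) - 1 ≠ 0 := by linarith
  have : (p : ℝ) ^ 2 - 1 ≠ 0 := by nlinarith
  field_simp
  ring
end

section
/- For every natural number d there exists a constant C = C(d) > 0 such that for every totally real number field K with [K : ℚ] ≤ d and every real M ≥ 1, the set {α ∈ 𝓞_K : |σ(α)| ≤ M for every embedding σ : K → ℂ} is finite and has cardinality at most C·M^d. -/
open NumberField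

/-! If `K` is totally real and `⌊σ α⌋ = ⌊σ β⌋` for every embedding `σ`, then every conjugate of
`α - β` lies in `(-1, 1)`; since the norm of a nonzero algebraic integer is a nonzero rational
integer, this forces `α = β`. So `α ↦ (⌊σ α⌋)_σ` injects the integers in the box into the
`(⌊M⌋ + ⌈M⌉ + 1) ^ [K : ℚ] ≤ (4 M) ^ [K : ℚ]` integer points of a box. -/

theorem NumberField.RingOfIntegers.eq_of_forall_norm_embedding_sub_lt_one
    {K : Type*} [Field K] [NumberField K] {a b : 𝓞 K}
    (h : ∀ σ : K →+* ℂ, ‖σ a - σ b‖ < 1) : a = b := by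
  by_contra hab
  obtain ⟨σ, hσ⟩ := exists_conjugate_one_le_norm (sub_ne_zero.2 hab)
  exact (h σ).not_ge (by simpa using hσ)

theorem NumberField.RingOfIntegers.floor_re_embedding_injective
    {K : Type*} [Field K] [NumberField K] (htr : ∀ (σ : K →+* ℂ) (x : K), (σ x).im = 0) :
    Function.Injective fun (α : 𝓞 K) (σ : K →+* ℂ) ↦ ⌊(σ α).re⌋ := by
  refine fun a b hab ↦ eq_of_forall_norm_embedding_sub_lt_one fun σ ↦ ?_
  have him : (σ a - σ b).im = 0 := by simpa using htr σ (a - b)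
  rw [← Complex.abs_re_eq_norm.2 him, Complex.sub_re]
  exact Int.abs_sub_lt_one_of_floor_eq_floor (congrFun hab σ)

theorem card_Icc_floor_neg_floor_le {M : ℝ} (hM : 1 ≤ M) :
    ((Finset.Icc ⌊-M⌋ ⌊M⌋).card : ℝ) ≤ 4 * M := by
  have hfloor : (⌊M⌋ : ℝ) ≤ M := Int.floor_le M
  have hceil : (⌈M⌉ : ℝ) < M + 1 := Int.ceil_lt_add_one M
  have hnonneg : 0 ≤ ⌊M⌋ + 1 + ⌈M⌉ := by
    have := Int.floor_nonneg.2 (zero_le_one.trans hM)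
    have := Int.ceil_nonneg (zero_le_one.trans hM)
    omega
  rw [Int.card_Icc, Int.floor_neg, sub_neg_eq_add, ← Int.cast_natCast, Int.toNat_of_nonneg hnonneg]
  push_cast
  linarith

theorem card_piFinset_Icc_floor_neg_floor_le (ι : Type*) [Fintype ι] [DecidableEq ι] {M : ℝ}
    (hM : 1 ≤ M) :
    ((Fintype.piFinset fun _ : ι ↦ Finset.Icc ⌊-M⌋ ⌊M⌋).card : ℝ) ≤ (4 * M) ^ Fintype.card ι := by
  rw [Fintype.card_piFinset, Finset.prod_const, Finset.card_univ, Nat.cast_pow]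
  exact pow_le_pow_left₀ (Nat.cast_nonneg _) (card_Icc_floor_neg_floor_le hM) _

theorem totally_real_integers_in_box_card_le (d : ℕ) :
    ∃ C : ℝ, 0 < C ∧
      ∀ (K : Type) [Field K] [NumberField K],
        (∀ (σ : K →+* ℂ) (x : K), (σ x).im = 0) →
        Module.finrank ℚ K ≤ d →
        ∀ M : ℝ, 1 ≤ M →
          {α : NumberField.RingOfIntegers K |
              ∀ σ : K →+* ℂ, ‖σ (algebraMap (NumberField.RingOfIntegers K) K α)‖ ≤ M}.Finite ∧
          (({α : NumberField.RingOfIntegers K |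
              ∀ σ : K →+* ℂ, ‖σ (algebraMap (NumberField.RingOfIntegers K) K α)‖ ≤ M}.ncard : ℝ)
            ≤ C * M ^ d) := by
  classical
  refine ⟨4 ^ d, by positivity, fun K _ _ htr hd M hM ↦ ?_⟩
  set S := {α : 𝓞 K | ∀ σ : K →+* ℂ, ‖σ (algebraMap (𝓞 K) K α)‖ ≤ M}
  set box := Fintype.piFinset fun _ : K →+* ℂ ↦ Finset.Icc ⌊-M⌋ ⌊M⌋
  have hmaps : Set.MapsTo (fun (α : 𝓞 K) (σ : K →+* ℂ) ↦ ⌊(σ α).re⌋) S box := by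
    intro α hα
    simp only [box, Finset.mem_coe, Fintype.mem_piFinset, Finset.mem_Icc]
    intro σ
    have hre := abs_le.1 ((Complex.abs_re_le_norm _).trans (hα σ))
    exact ⟨Int.floor_mono hre.1, Int.floor_mono hre.2⟩
  have hinj := (RingOfIntegers.floor_re_embedding_injective htr).injOn (s := S)
  refine ⟨Set.Finite.of_injOn hmaps hinj box.finite_toSet, ?_⟩
  calc (S.ncard : ℝ) ≤ box.card := by
        exact_mod_cast (Set.ncard_le_ncard_of_injOn _ hmaps hinj box.finite_toSet).trans_eq
          (Set.ncard_coe_finset box)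
    _ ≤ (4 * M) ^ Module.finrank ℚ K := by
        simpa only [Embeddings.card] using card_piFinset_Icc_floor_neg_floor_le (K →+* ℂ) hM
    _ ≤ (4 * M) ^ d := pow_le_pow_right₀ (by linarith) hd
    _ = 4 ^ d * M ^ d := mul_pow 4 M d
end

section
/- Let K be a number field of degree d over ℚ, let B ≥ 1 be a real number, and suppose K = ℚ(α) for an algebraic integer α ∈ 𝓞_K such that for every embedding σ : K → ℂ, σ(α) is real with |σ(α)| ≤ B. Then the absolute value of the discriminant of K satisfies |disc(K)| ≤ (2B)^{d(d−1)}. -/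
/-!
Since `α` generates `K` and is integral, its powers form a `ℚ`-basis of `K` inside `𝓞 K`; its
discriminant is `[𝓞 K : ℤ[α]]²` times `disc K`, so it dominates `|disc K|`. On the other hand it is
the Vandermonde product `∏_{i<j} (σ_j α - σ_i α)²` over the `d` embeddings `σ_i : K → ℂ`, and each
of its `d(d-1)/2` factors is at most `(2B)²`.
-/

open Finset

theorem Fin.two_mul_sum_card_Ioi (n : ℕ) : 2 * ∑ i : Fin n, #(Ioi i) = n * (n - 1) := by
  simp_rw [Fin.card_Ioi]
  rw [Fin.sum_univ_eq_sum_range (fun i => n - 1 - i) n,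
    Finset.sum_range_reflect (fun j => j) n]
  have := Finset.sum_range_id_mul_two n
  omega

theorem Algebra.norm_discr_powerBasis_le {K L E : Type*} [Field K] [Field L] [Algebra K L]
    [Algebra.IsSeparable K L] [NormedField E] [IsAlgClosed E] [Algebra K E]
    (pb : PowerBasis K L) {B : ℝ} (hB : ∀ σ : L →ₐ[K] E, ‖σ pb.gen‖ ≤ B) :
    ‖algebraMap K E (discr K pb.basis)‖ ≤ (2 * B) ^ (pb.dim * (pb.dim - 1)) := by
  have := pb.finite
  let e : Fin pb.dim ≃ (L →ₐ[K] E) :=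
    (Fintype.equivFinOfCardEq (by rw [AlgHom.card, pb.finrank])).symm
  have hdist (i j) : ‖e j pb.gen - e i pb.gen‖ ≤ 2 * B := by
    linarith [norm_sub_le (e j pb.gen) (e i pb.gen), hB (e i), hB (e j)]
  calc ‖algebraMap K E (discr K pb.basis)‖
      = ∏ i : Fin pb.dim, ∏ j ∈ Ioi i, ‖e j pb.gen - e i pb.gen‖ ^ 2 := by
        simp only [discr_powerBasis_eq_prod K E pb e, norm_prod, norm_pow]
    _ ≤ ∏ i : Fin pb.dim, ∏ j ∈ Ioi i, (2 * B) ^ 2 := by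
        gcongr with i _ j _
        exact hdist i j
    _ = (2 * B) ^ (pb.dim * (pb.dim - 1)) := by
        simp only [prod_const, ← pow_mul, prod_pow_eq_pow_sum, ← Fin.two_mul_sum_card_Ioi,
          mul_sum]

theorem Rat.one_le_abs_of_isIntegral {q : ℚ} (hq : IsIntegral ℤ q) (h0 : q ≠ 0) : 1 ≤ |q| := by
  obtain ⟨r, rfl⟩ := IsIntegrallyClosed.isIntegral_iff.1 hq
  have hr : r ≠ 0 := by rintro rfl; simp at h0
  rw [eq_intCast]
  exact_mod_cast Int.one_le_abs hr

theorem NumberField.abs_discr_le_abs_discr_of_isIntegral {K ι : Type*} [Field K] [NumberField K]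
    [Fintype ι] [DecidableEq ι] (b : Module.Basis ι ℚ K) (hb : ∀ i, IsIntegral ℤ (b i)) :
    |(discr K : ℚ)| ≤ |Algebra.discr ℚ b| := by
  let c := (integralBasis K).reindex ((integralBasis K).indexEquiv b)
  have hint (i j) : IsIntegral ℤ (c.toMatrix b i j) := by
    obtain ⟨y, hy⟩ := (IsIntegralClosure.isIntegral_iff (A := RingOfIntegers K)).1 (hb j)
    simp only [Module.Basis.toMatrix_apply, c, Module.Basis.repr_reindex_apply, ← hy,
      integralBasis_repr_apply]
    exact isIntegral_algebraMap
  have hdet : (c.toMatrix b).det ≠ 0 := by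
    intro h0
    have h1 := congrArg Matrix.det (c.toMatrix_mul_toMatrix_flip b)
    rw [Matrix.det_mul, h0, zero_mul, Matrix.det_one] at h1
    exact zero_ne_one h1
  have hc : Algebra.discr ℚ c = discr K := by
    rw [Module.Basis.coe_reindex, Algebra.discr_reindex, coe_discr]
  rw [← c.toMatrix_map_vecMul b, Algebra.discr_of_matrix_vecMul, hc, abs_mul, abs_pow]
  exact le_mul_of_one_le_left (abs_nonneg _)
    (one_le_pow₀ (Rat.one_le_abs_of_isIntegral (IsIntegral.det hint) hdet))

theorem discr_bound_of_generator_bounded_general (K : Type) [Field K] [NumberField K] (d : ℕ)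
    (hd : Module.finrank ℚ K = d) (B : ℝ)
    (α : NumberField.RingOfIntegers K)
    (hgen : IntermediateField.adjoin ℚ
        {(algebraMap (NumberField.RingOfIntegers K) K α)} = ⊤)
    (hbound : ∀ σ : K →+* ℂ,
        ‖σ (algebraMap (NumberField.RingOfIntegers K) K α)‖ ≤ B) :
    |(NumberField.discr K : ℝ)| ≤ (2 * B) ^ (d * (d - 1)) := by
  set x := algebraMap (NumberField.RingOfIntegers K) K α
  have hx : IsIntegral ℚ x := .of_finite ℚ x
  let pb := PowerBasis.ofAdjoinEqTop hx
    ((IntermediateField.adjoin_simple_eq_top_iff_of_isAlgebraic hx.isAlgebraic).1 hgen)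
  have hdim : pb.dim = d := by rw [← hd, pb.finrank]
  have hpb_int (i) : IsIntegral ℤ (pb.basis i) := by
    rw [pb.basis_eq_pow, PowerBasis.ofAdjoinEqTop_gen]
    exact (α.isIntegral_coe).pow _
  have hnorm := Algebra.norm_discr_powerBasis_le (E := ℂ) pb fun σ => hbound σ.toRingHom
  rw [eq_ratCast, Complex.norm_ratCast] at hnorm
  calc |(NumberField.discr K : ℝ)| = ((|(NumberField.discr K : ℚ)| : ℚ) : ℝ) := by push_cast; rfl
    _ ≤ |(Algebra.discr ℚ pb.basis : ℝ)| := by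
        exact_mod_cast NumberField.abs_discr_le_abs_discr_of_isIntegral pb.basis hpb_int
    _ ≤ (2 * B) ^ (pb.dim * (pb.dim - 1)) := hnorm
    _ = (2 * B) ^ (d * (d - 1)) := by rw [hdim]

theorem discr_bound_of_generator_bounded (K : Type) [Field K] [NumberField K] (d : ℕ)
    (hd : Module.finrank ℚ K = d) (B : ℝ) (hB : 1 ≤ B)
    (α : NumberField.RingOfIntegers K)
    (hgen : IntermediateField.adjoin ℚ
        {(algebraMap (NumberField.RingOfIntegers K) K α)} = ⊤)
    (hreal : ∀ σ : K →+* ℂ, (σ (algebraMap (NumberField.RingOfIntegers K) K α)).im = 0)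
    (hbound : ∀ σ : K →+* ℂ,
        ‖σ (algebraMap (NumberField.RingOfIntegers K) K α)‖ ≤ B) :
    |(NumberField.discr K : ℝ)| ≤ (2 * B) ^ (d * (d - 1)) :=
  discr_bound_of_generator_bounded_general K d hd B α hgen hbound
end

section
/- There exists a constant C > 0 such that for every real Y ≥ 3, |∑_{p ≤ Y, p prime} log log p − π(Y)·log log Y| ≤ C·Y/(log Y)², where π(Y) denotes the number of primes up to Y. -/
/-!
Put `F = log ∘ log` and `N = ⌊Y⌋`. The difference equals `-∑_{p ≤ N} (F Y - F p)`, and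
`∑_{p ≤ N} (F Y - F p) ≤ ∑_{p ≤ N} (F (N + 1) - F p)`, which partial summation turns into
`∑_{n ≤ N} π(n) (F (n + 1) - F n)`. Since `F (n + 1) - F n ≤ 1 / (n log n)` and Chebyshev's bound
gives `π(n) ≤ 5 n / log n`, each term is at most `5 / log² n`. Finally
`∑_{n ≤ N} 1 / log² n ≪ N / log² N`: the `O(√N)` terms with `n ≤ √N` are bounded, and for `n > √N`
we have `log n > (log N) / 2`.
-/

open Finset Real
open Nat (primesLE primeCounting)

theorem sum_primesLE_sub_eq_sum_primeCounting_smul {M : Type*} [AddCommGroup M] (F : ℕ → M)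
    (N : ℕ) :
    ∑ p ∈ primesLE N, (F (N + 1) - F p) =
      ∑ n ∈ range (N + 1), primeCounting n • (F (n + 1) - F n) := calc
  _ = ∑ p ∈ primesLE N, ∑ n ∈ Ico p (N + 1), (F (n + 1) - F n) :=
    sum_congr rfl fun p hp ↦ (sum_Ico_sub F (by grind [Nat.le_of_mem_primesLE hp])).symm
  _ = ∑ n ∈ range (N + 1), ∑ _p ∈ primesLE n, (F (n + 1) - F n) :=
    sum_comm' fun p n ↦ by simp only [Nat.mem_primesLE, mem_Ico, mem_range]; grind
  _ = _ := by simp only [sum_const, Nat.primesLE_card_eq_primeCounting]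

theorem log_sub_log_le_sub_div {a b : ℝ} (ha : 0 < a) (hb : 0 < b) :
    log a - log b ≤ (a - b) / b := by
  rw [← log_div ha.ne' hb.ne', sub_div, div_self hb.ne']
  exact log_le_sub_one_of_pos (div_pos ha hb)

theorem log_log_add_one_sub_log_log_le {x : ℝ} (hx : 1 < x) :
    log (log (x + 1)) - log (log x) ≤ 1 / (x * log x) := by
  have hlog : 0 < log x := log_pos hx
  calc log (log (x + 1)) - log (log x) ≤ (log (x + 1) - log x) / log x :=
        log_sub_log_le_sub_div (log_pos (by linarith)) hlog
    _ ≤ (x + 1 - x) / x / log x := by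
        gcongr
        exact log_sub_log_le_sub_div (by linarith) (by linarith)
    _ = 1 / (x * log x) := by field_simp; ring

theorem log_le_natCast_mul_rpow_one_div {x : ℝ} (hx : 0 ≤ x) {k : ℕ} (hk : 0 < k) :
    log x ≤ k * x ^ (1 / k : ℝ) := by
  have := log_le_rpow_div hx (ε := 1 / k) (by positivity)
  rwa [div_div_eq_mul_div, div_one, mul_comm] at this

theorem log_le_two_mul_sqrt {x : ℝ} (hx : 0 ≤ x) : log x ≤ 2 * √x := by
  simpa [sqrt_eq_rpow] using log_le_natCast_mul_rpow_one_div hx two_pos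

theorem log_sq_le_sixteen_mul_sqrt {x : ℝ} (hx : 1 ≤ x) : log x ^ 2 ≤ 16 * √x := by
  have h := log_le_natCast_mul_rpow_one_div (by linarith : (0:ℝ) ≤ x) (k := 4) (by norm_num)
  calc log x ^ 2 ≤ (4 * x ^ (1 / 4 : ℝ)) ^ 2 := by
        gcongr
        · exact log_nonneg hx
        · exact_mod_cast h
    _ = 16 * √x := by
        rw [mul_pow, ← rpow_natCast (x ^ _), ← rpow_mul (by linarith), sqrt_eq_rpow]; norm_num

theorem log_four_lt_three_halves : log 4 < 3 / 2 := by
  rw [show (4:ℝ) = 2 ^ 2 by norm_num, log_pow]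
  push_cast
  linarith [log_two_lt_d9]

theorem primeCounting_floor_le_five_mul_div_log {x : ℝ} (hx : 1 < x) :
    (primeCounting ⌊x⌋₊ : ℝ) ≤ 5 * x / log x := by
  have hlog : 0 < log x := log_pos hx
  have hsqrt : √x ≤ 2 * x / log x := by
    rw [le_div_iff₀ hlog]
    have := log_le_two_mul_sqrt (x := x) (by linarith)
    nlinarith [mul_self_sqrt (by linarith : (0:ℝ) ≤ x), sqrt_nonneg x]
  calc (primeCounting ⌊x⌋₊ : ℝ)
      ≤ log 4 * x / log √x + √x := Chebyshev.pi_le_log4_mul_div hx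
    _ ≤ 3 * x / log x + 2 * x / log x := by
        have : log 4 * x / log √x = 2 * log 4 * x / log x := by
          rw [log_sqrt (by linarith)]; field_simp
        rw [this]
        gcongr
        linarith [log_four_lt_three_halves]
    _ = 5 * x / log x := by ring

theorem one_div_log_natCast_sq_le_three (n : ℕ) : 1 / log n ^ 2 ≤ 3 := by
  rcases lt_or_ge n 2 with hn | hn
  · interval_cases n <;> norm_num
  have h2 : log 2 ≤ log n := log_le_log (by norm_num) (by exact_mod_cast hn)
  have : (1 : ℝ) / 3 ≤ log n ^ 2 := by nlinarith [log_two_gt_d9]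
  rw [div_le_iff₀ (by positivity)]
  linarith

theorem one_div_log_sq_le_of_lt_sq {N n : ℕ} (hN : 2 ≤ N) (hn : N < n ^ 2) :
    1 / log n ^ 2 ≤ 4 / log N ^ 2 := by
  have hlogN : 0 < log N := log_pos (by exact_mod_cast hN)
  have hlt : log N < 2 * log n := calc
    log N < log ((n ^ 2 : ℕ) : ℝ) := log_lt_log (by positivity) (by exact_mod_cast hn)
    _ = 2 * log n := by push_cast; rw [log_pow]; norm_num
  rw [div_le_div_iff₀ (by nlinarith) (by positivity)]
  nlinarith

/-- The terms `n = 0, 1` vanish since `log 0 = log 1 = 0` and `1 / 0 = 0`. -/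
theorem sum_range_one_div_log_sq_le {N : ℕ} (hN : 2 ≤ N) :
    ∑ n ∈ range (N + 1), 1 / log n ^ 2 ≤ 100 * N / log N ^ 2 := by
  have hN1 : (1 : ℝ) ≤ N := by exact_mod_cast (by omega : 1 ≤ N)
  have hlogN : 0 < log N := log_pos (by exact_mod_cast hN)
  set K := Nat.sqrt N + 1
  have hKN : K ≤ N + 1 := by have := Nat.sqrt_le_self N; omega
  have hK : (K : ℝ) ≤ 2 * √N := by
    have := Real.nat_sqrt_le_real_sqrt (a := N)
    have : 1 ≤ √(N : ℝ) := one_le_sqrt.mpr hN1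
    push_cast [K]; linarith
  have small : ∑ n ∈ range K, 1 / log n ^ 2 ≤ (K : ℝ) * 3 := by
    simpa using sum_le_card_nsmul (range K) _ _ fun n _ ↦ one_div_log_natCast_sq_le_three n
  have large : ∑ n ∈ Ico K (N + 1), 1 / log n ^ 2 ≤ N * (4 / log N ^ 2) := by
    calc _ ≤ ((N + 1 - K : ℕ) : ℝ) * (4 / log N ^ 2) := by
          simpa using sum_le_card_nsmul (Ico K (N + 1)) (fun n : ℕ ↦ 1 / log n ^ 2) _
            fun n hn ↦
            one_div_log_sq_le_of_lt_sq hN (Nat.sqrt_lt'.mp (mem_Ico.mp hn).1)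
      _ ≤ N * (4 / log N ^ 2) := by gcongr; exact_mod_cast (by omega : N + 1 - K ≤ N)
  have hsqrt : 6 * √N ≤ 96 * N / log N ^ 2 := by
    rw [le_div_iff₀ (by positivity)]
    nlinarith [log_sq_le_sixteen_mul_sqrt hN1, mul_self_sqrt (by linarith : (0:ℝ) ≤ N),
      sqrt_nonneg (N : ℝ)]
  rw [← sum_range_add_sum_Ico _ hKN]
  calc _ ≤ (K : ℝ) * 3 + N * (4 / log N ^ 2) := add_le_add small large
    _ ≤ 96 * N / log N ^ 2 + N * (4 / log N ^ 2) := by linarith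
    _ = 100 * N / log N ^ 2 := by ring

theorem primeCounting_mul_log_log_succ_sub_le (n : ℕ) :
    primeCounting n * (log (log (n + 1 : ℕ)) - log (log n)) ≤ 5 * (1 / log n ^ 2) := by
  rcases lt_or_ge n 2 with hn | hn
  · interval_cases n <;> simp
  have hn1 : (1 : ℝ) < n := by exact_mod_cast hn
  have hlog : 0 < log n := log_pos hn1
  calc primeCounting n * (log (log (n + 1 : ℕ)) - log (log n))
      ≤ primeCounting n * (1 / (n * log n)) := by
        push_cast
        gcongr
        exact log_log_add_one_sub_log_log_le hn1
    _ ≤ 5 * n / log n * (1 / (n * log n)) := by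
        gcongr
        simpa using primeCounting_floor_le_five_mul_div_log hn1
    _ = 5 * (1 / log n ^ 2) := by field_simp

theorem sum_primesLE_log_log_sub_le {N : ℕ} (hN : 2 ≤ N) :
    ∑ p ∈ primesLE N, (log (log (N + 1 : ℕ)) - log (log p)) ≤ 500 * N / log N ^ 2 := calc
  _ = ∑ n ∈ range (N + 1), primeCounting n * (log (log (n + 1 : ℕ)) - log (log n)) := by
    simpa [nsmul_eq_mul] using
      sum_primesLE_sub_eq_sum_primeCounting_smul (fun n : ℕ ↦ log (log n)) N
  _ ≤ ∑ n ∈ range (N + 1), 5 * (1 / log n ^ 2) :=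
    sum_le_sum fun n _ ↦ primeCounting_mul_log_log_succ_sub_le n
  _ ≤ 5 * (100 * N / log N ^ 2) := by
    rw [← mul_sum]
    gcongr
    exact sum_range_one_div_log_sq_le hN
  _ = 500 * N / log N ^ 2 := by ring

theorem natCast_floor_div_log_sq_le {x : ℝ} (hx : 2 ≤ x) :
    (⌊x⌋₊ : ℝ) / log ⌊x⌋₊ ^ 2 ≤ 4 * (x / log x ^ 2) := by
  set N := ⌊x⌋₊
  have hN : 2 ≤ N := Nat.le_floor (by exact_mod_cast hx)
  have hlogx : 0 < log x := log_pos (by linarith)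
  have hlogN : log x ≤ 2 * log N := calc
    log x ≤ log ((N ^ 2 : ℕ) : ℝ) := by
      refine log_le_log (by linarith) ((Nat.lt_floor_add_one x).le.trans ?_)
      exact_mod_cast (by nlinarith : N + 1 ≤ N ^ 2)
    _ = 2 * log N := by push_cast; rw [log_pow]; norm_num
  have hsq : log x ^ 2 ≤ 4 * log N ^ 2 := by nlinarith
  rw [mul_div_assoc', div_le_div_iff₀ (by nlinarith) (by positivity)]
  calc (N : ℝ) * log x ^ 2 ≤ x * (4 * log N ^ 2) := by
        gcongr
        exact Nat.floor_le (by linarith)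
    _ = 4 * x * log N ^ 2 := by ring

theorem sum_loglog_primes_partial_summation :
    ∃ C : ℝ, 0 < C ∧ ∀ Y : ℝ, 3 ≤ Y →
      |(∑ p ∈ (Finset.Iic ⌊Y⌋₊).filter Nat.Prime, Real.log (Real.log p)) -
          (((Finset.Iic ⌊Y⌋₊).filter Nat.Prime).card : ℝ) * Real.log (Real.log Y)|
        ≤ C * Y / Real.log Y ^ 2 := by
  refine ⟨2000, by norm_num, fun Y hY ↦ ?_⟩
  set N := ⌊Y⌋₊
  have hN : 2 ≤ N := Nat.le_floor (by norm_num; linarith)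
  have log_log_mono {a b : ℝ} (ha : 1 < a) (hab : a ≤ b) : log (log a) ≤ log (log b) :=
    log_le_log (log_pos ha) (log_le_log (by linarith) hab)
  have hprime {p : ℕ} (hp : p ∈ primesLE N) : 1 < (p : ℝ) ∧ (p : ℝ) ≤ Y :=
    ⟨mod_cast Nat.one_lt_of_mem_primesLE hp,
      (Nat.cast_le.mpr (Nat.le_of_mem_primesLE hp)).trans (Nat.floor_le (by linarith))⟩
  have hfilter : (Iic N).filter Nat.Prime = primesLE N := by ext; simp [Nat.mem_primesLE]
  rw [hfilter, abs_sub_comm, ← nsmul_eq_mul, ← sum_const, ← sum_sub_distrib,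
    abs_of_nonneg <| sum_nonneg fun p hp ↦
      sub_nonneg.mpr (log_log_mono (hprime hp).1 (hprime hp).2)]
  calc ∑ p ∈ primesLE N, (log (log Y) - log (log p))
      ≤ ∑ p ∈ primesLE N, (log (log (N + 1 : ℕ)) - log (log p)) := by
        refine sum_le_sum fun p _ ↦ sub_le_sub_right (log_log_mono (by linarith) ?_) _
        exact_mod_cast (Nat.lt_floor_add_one Y).le
    _ ≤ 500 * N / log N ^ 2 := sum_primesLE_log_log_sub_le hN
    _ ≤ 2000 * Y / log Y ^ 2 := by
        have := natCast_floor_div_log_sq_le (by linarith : (2 : ℝ) ≤ Y)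
        rw [mul_div_assoc, mul_div_assoc]
        linarith
end
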